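/- arXiv:1907.03251 — 6 statements merged into one kernel-verified Lean document; each statement's English description precedes it below -/
import Mathlib

section
/- For every natural number n ≥ 1, the number of pairs (x, y) of n-bit integers satisfying x ⊕ y ≡ x − y (mod 2^n), where the congruence is taken in the integers, equals 4 · 3^(n−1); moreover, for n-bit integers x, y this congruence holds if and only if the pair of bits (x_i, y_i) is not (0, 1) for every position i with 0 ≤ i ≤ n − 2. -/
/-!
Writing `z = (x ^^^ y) &&& y` for the set of bits where `(x_i, y_i) = (0, 1)`, the carry identity
`a + b = (a ^^^ b) + 2 (a &&& b)` applied to `a = x ^^^ y`, `b = y` gives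
`x - y = (x ^^^ y) - 2 z`. So the congruence says `2^n ∣ 2 z`, i.e. that the lowest `n - 1` bits
of `z` vanish. Counting: the bit pairs `(x_i, y_i)` of two `n`-bit numbers are independent,
with three admissible values at each of the positions `i < n - 1` and four at the top one.
-/

open Finset

namespace Nat

theorem xor_add_two_mul_and (a b : ℕ) : (a ^^^ b) + 2 * (a &&& b) = a + b := by
  induction a using Nat.binaryRec generalizing b with
  | zero => simp
  | bit c m ih =>
    rw [← bit_bodd_div2 b, xor_bit, land_bit]
    have := ih b.div2
    cases c <;> cases b.bodd <;> simp [bit_val] <;> omega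

theorem xor_add_right_eq_add_two_mul (x y : ℕ) :
    (x ^^^ y) + y = x + 2 * ((x ^^^ y) &&& y) := by
  have := xor_add_two_mul_and (x ^^^ y) y
  rw [xor_xor_cancel_right] at this
  omega

theorem testBit_xor_and_right (x y i : ℕ) :
    ((x ^^^ y) &&& y).testBit i = (!x.testBit i && y.testBit i) := by
  rw [testBit_and, testBit_xor]
  cases x.testBit i <;> cases y.testBit i <;> rfl

theorem two_pow_dvd_iff_testBit (k z : ℕ) : 2 ^ k ∣ z ↔ ∀ i < k, z.testBit i = false := by
  rw [dvd_iff_mod_eq_zero]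
  constructor
  · intro h i hi
    simpa [hi] using congrArg (testBit · i) h
  · intro h
    apply eq_of_testBit_eq
    intro i
    by_cases hi : i < k <;> simp [hi, h]

theorem two_pow_dvd_two_mul_iff (n z : ℕ) : 2 ^ n ∣ 2 * z ↔ 2 ^ (n - 1) ∣ z := by
  cases n with
  | zero => simp
  | succ n => rw [pow_succ', Nat.mul_dvd_mul_iff_left two_pos, Nat.add_sub_cancel]

theorem eq_of_testBit_eq_of_lt_two_pow {k x y : ℕ} (hx : x < 2 ^ k) (hy : y < 2 ^ k)
    (h : ∀ i < k, x.testBit i = y.testBit i) : x = y := by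
  apply eq_of_testBit_eq
  intro i
  by_cases hi : i < k
  · exact h i hi
  · have hk : 2 ^ k ≤ 2 ^ i := Nat.pow_le_pow_right two_pos (by omega)
    rw [testBit_lt_two_pow (hx.trans_le hk), testBit_lt_two_pow (hy.trans_le hk)]

end Nat

theorem xor_modEq_sub_iff (n x y : ℕ) :
    ((x ^^^ y : ℕ) : ℤ) ≡ (x : ℤ) - (y : ℤ) [ZMOD (2 ^ n : ℕ)] ↔
      ∀ i < n - 1, ¬(x.testBit i = false ∧ y.testBit i = true) := by
  have hsub : (x : ℤ) - y - (x ^^^ y : ℕ) = -((2 * ((x ^^^ y) &&& y) : ℕ) : ℤ) := by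
    have := Nat.xor_add_right_eq_add_two_mul x y
    push_cast
    omega
  rw [Int.modEq_iff_dvd, hsub, dvd_neg, Int.natCast_dvd_natCast, Nat.two_pow_dvd_two_mul_iff,
    Nat.two_pow_dvd_iff_testBit]
  simp only [Nat.testBit_xor_and_right]
  grind

theorem card_filter_forall_testBit (k : ℕ) (c : ℕ → Bool × Bool → Prop)
    [∀ i, DecidablePred (c i)] :
    #{p ∈ range (2 ^ k) ×ˢ range (2 ^ k) | ∀ i < k, c i (p.1.testBit i, p.2.testBit i)}
      = ∏ i : Fin k, #{b | c i b} := by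
  set S := range (2 ^ k) ×ˢ range (2 ^ k)
  let bits : ℕ × ℕ → Fin k → Bool × Bool := fun p i => (p.1.testBit i, p.2.testBit i)
  have hinj : Set.InjOn bits S := by
    intro p hp q hq hpq
    simp only [S, coe_product, coe_range, Set.mem_prod, Set.mem_Iio] at hp hq
    have hbit i (hi : i < k) := Prod.ext_iff.mp (congrFun hpq ⟨i, hi⟩)
    exact Prod.ext (Nat.eq_of_testBit_eq_of_lt_two_pow hp.1 hq.1 fun i hi => (hbit i hi).1)
      (Nat.eq_of_testBit_eq_of_lt_two_pow hp.2 hq.2 fun i hi => (hbit i hi).2)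
  have himage : S.image bits = univ := by
    apply eq_univ_of_card
    rw [card_image_of_injOn hinj]
    simp [S, ← mul_pow]
  calc #{p ∈ S | ∀ i < k, c i (p.1.testBit i, p.2.testBit i)}
      = #((S.filter fun p => ∀ i : Fin k, c i (bits p i)).image bits) := by
        rw [card_image_of_injOn (hinj.mono (filter_subset _ _))]
        congr 1
        ext p
        simp [bits, Fin.forall_iff]
    _ = #(Fintype.piFinset fun i : Fin k => ({b | c i b} : Finset (Bool × Bool))) := by
        rw [← filter_image (p := fun f : Fin k → Bool × Bool => ∀ i : Fin k, c i (f i)), himage]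
        congr 1
        ext f
        simp
    _ = ∏ i : Fin k, #{b | c i b} := Fintype.card_piFinset _

open scoped Classical in
/-- For `n ≥ 1`, the number of pairs `(x, y)` of `n`-bit integers with
`x ^^^ y ≡ x - y [ZMOD 2^n]` is `4 * 3^(n-1)`; moreover this congruence holds iff
`(x_i, y_i) ≠ (0, 1)` for every `i ≤ n - 2`. -/
theorem card_xor_modEq_sub (n : ℕ) (hn : 1 ≤ n) :
    ((Finset.range (2 ^ n) ×ˢ Finset.range (2 ^ n)).filter
      (fun p : ℕ × ℕ =>
        ((p.1 ^^^ p.2 : ℕ) : ℤ) ≡ (p.1 : ℤ) - (p.2 : ℤ) [ZMOD (2 ^ n : ℕ)])).card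
      = 4 * 3 ^ (n - 1) ∧
    (∀ x y : ℕ, x < 2 ^ n → y < 2 ^ n →
      (((x ^^^ y : ℕ) : ℤ) ≡ (x : ℤ) - (y : ℤ) [ZMOD (2 ^ n : ℕ)] ↔
        ∀ i < n - 1, ¬(x.testBit i = false ∧ y.testBit i = true))) := by
  refine ⟨?_, fun x y _ _ => xor_modEq_sub_iff n x y⟩
  obtain ⟨m, rfl⟩ : ∃ m, n = m + 1 := ⟨n - 1, by omega⟩
  let c : ℕ → Bool × Bool → Prop := fun i b => i < m → ¬(b.1 = false ∧ b.2 = true)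
  calc _ = #{p ∈ range (2 ^ (m + 1)) ×ˢ range (2 ^ (m + 1)) |
          ∀ i < m + 1, c i (p.1.testBit i, p.2.testBit i)} := by
        congr 1
        ext p
        simp only [xor_modEq_sub_iff, c, mem_filter, Nat.add_sub_cancel]
        exact and_congr_right fun _ =>
          ⟨fun h i _ => h i, fun h i hi => h i (by omega) hi⟩
    _ = ∏ i : Fin (m + 1), #{b | c i b} := by convert card_filter_forall_testBit (m + 1) c
    _ = 4 * 3 ^ m := by
        have h3 : #{b : Bool × Bool | ¬(b.1 = false ∧ b.2 = true)} = 3 := rfl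
        rw [Fin.prod_univ_castSucc]
        simp only [c, Fin.val_castSucc, Fin.is_lt, Fin.val_last, lt_irrefl, forall_const,
          IsEmpty.forall_iff, filter_true, h3, prod_const, card_univ, Fintype.card_fin]
        simp [mul_comm]
end

section
/- Let n ≥ 1 be a natural number and let X be the set of pairs (x, y) of n-bit integers. Define A' = {(x,y) ∈ X : x ⊕ y ≡ x + y (mod 2^n)}, B' = {(x,y) ∈ X : x ⊕ y ≡ x − y (mod 2^n)}, C' = {(x,y) ∈ X : x ⊕ y ≡ y − x (mod 2^n)}, where the congruences are taken in the integers. Then #A' = #B' = #C' = 4·3^(n−1), #(A' ∩ B') = #(B' ∩ C') = #(C' ∩ A') = 4·2^(n−1), #(A' ∩ B' ∩ C') = 4, and #(A' ∪ B' ∪ C') = 4·(3·3^(n−1) − 3·2^(n−1) + 1). -/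
/-!
Since `x + y = (x ^^^ y) + 2 * (x &&& y)`, the congruence `x ^^^ y ≡ x + y [ZMOD 2 ^ (m + 1)]`
says that `x` and `y` have no common bit below position `m`. Because `(x ^^^ y) ^^^ y = x`, the
two subtraction congruences reduce to this one and forbid one other pair of bits each. So each of
the sets `A'`, `B'`, `C'` and their intersections is cut out by a condition on the pair of `i`-th
bits for each `i < m`, the top bit being free. As `(x, y) ↦ (i ↦ (x.testBit i, y.testBit i))`
is a bijection from pairs of `n`-bit integers onto `Fin n → Bool × Bool`, such a set has
`4 * k ^ m` elements, `k` being the number of allowed bit pairs. The union is then counted by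
inclusion–exclusion.
-/

open Finset

theorem Nat.add_eq_xor_add_two_mul_and (x y : ℕ) : x + y = (x ^^^ y) + 2 * (x &&& y) := by
  induction x using Nat.strong_induction_on generalizing y with
  | _ x ih =>
    rcases Nat.eq_zero_or_pos x with rfl | hx
    · simp
    · have := ih (x / 2) (Nat.div_lt_self hx one_lt_two) (y / 2)
      have hxor : (x ^^^ y) / 2 = x / 2 ^^^ y / 2 := Nat.xor_div_two
      have hand : (x &&& y) / 2 = x / 2 &&& y / 2 := Nat.and_div_two
      have hxor₂ : (x ^^^ y) % 2 = 1 ↔ ¬(x % 2 = 1 ↔ y % 2 = 1) := Nat.xor_mod_two_eq_one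
      have hand₂ : (x &&& y) % 2 = 1 ↔ (x % 2 = 1 ∧ y % 2 = 1) := Nat.and_mod_two_eq_one
      omega

theorem Nat.two_pow_dvd_iff_testBit_eq_false (m z : ℕ) :
    2 ^ m ∣ z ↔ ∀ i < m, z.testBit i = false := by
  rw [Nat.dvd_iff_mod_eq_zero]
  constructor
  · intro h i hi
    simpa [hi] using congrArg (Nat.testBit · i) h
  · intro h
    refine Nat.eq_of_testBit_eq fun i => ?_
    by_cases hi : i < m <;> simp [hi, h]

def bitPair (p : ℕ × ℕ) (i : ℕ) : Bool × Bool := (p.1.testBit i, p.2.testBit i)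

theorem intCast_xor_modEq_add_iff (x y m : ℕ) :
    ((x ^^^ y : ℕ) : ℤ) ≡ x + y [ZMOD (2 ^ (m + 1) : ℕ)] ↔
      ∀ i < m, bitPair (x, y) i ≠ (true, true) := by
  have hcarry : (x : ℤ) + y - (x ^^^ y : ℕ) = ((2 * (x &&& y) : ℕ) : ℤ) := by
    have := Nat.add_eq_xor_add_two_mul_and x y
    omega
  rw [Int.modEq_iff_dvd, hcarry, Int.natCast_dvd_natCast, pow_succ',
    Nat.mul_dvd_mul_iff_left two_pos, Nat.two_pow_dvd_iff_testBit_eq_false]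
  simp [bitPair]

theorem intCast_xor_modEq_sub_iff (x y m : ℕ) :
    ((x ^^^ y : ℕ) : ℤ) ≡ x - y [ZMOD (2 ^ (m + 1) : ℕ)] ↔
      ∀ i < m, bitPair (x, y) i ≠ (false, true) := by
  have h := intCast_xor_modEq_add_iff (x ^^^ y) y m
  rw [Nat.xor_xor_cancel_right, Int.modEq_iff_dvd] at h
  rw [Int.modEq_iff_dvd, ← dvd_neg, neg_sub, sub_sub_eq_add_sub, h]
  refine forall₂_congr fun i _ => ?_
  simp only [bitPair, Nat.testBit_xor]
  cases x.testBit i <;> cases y.testBit i <;> decide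

theorem intCast_xor_modEq_rev_sub_iff (x y m : ℕ) :
    ((x ^^^ y : ℕ) : ℤ) ≡ y - x [ZMOD (2 ^ (m + 1) : ℕ)] ↔
      ∀ i < m, bitPair (x, y) i ≠ (true, false) := by
  have h := intCast_xor_modEq_sub_iff y x m
  rw [Nat.xor_comm] at h
  rw [h]
  refine forall₂_congr fun i _ => ?_
  simp only [bitPair, ne_eq, Prod.mk.injEq]
  tauto

theorem injOn_bitPair (m : ℕ) :
    Set.InjOn (fun p (i : Fin m) => bitPair p i) ↑(range (2 ^ m) ×ˢ range (2 ^ m)) := by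
  intro p hp q hq hpq
  simp only [coe_product, coe_range, Set.mem_prod, Set.mem_Iio] at hp hq
  have hbits (i : ℕ) : bitPair p i = bitPair q i := by
    by_cases hi : i < m
    · exact congrFun hpq ⟨i, hi⟩
    · have hle : 2 ^ m ≤ 2 ^ i := Nat.pow_le_pow_right two_pos (not_lt.1 hi)
      simp only [bitPair, Nat.testBit_lt_two_pow (hp.1.trans_le hle),
        Nat.testBit_lt_two_pow (hp.2.trans_le hle), Nat.testBit_lt_two_pow (hq.1.trans_le hle),
        Nat.testBit_lt_two_pow (hq.2.trans_le hle)]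
  exact Prod.ext (Nat.eq_of_testBit_eq fun i => congrArg Prod.fst (hbits i))
    (Nat.eq_of_testBit_eq fun i => congrArg Prod.snd (hbits i))

theorem image_bitPair_eq_univ (m : ℕ) :
    (range (2 ^ m) ×ˢ range (2 ^ m)).image (fun p (i : Fin m) => bitPair p i) = univ := by
  refine eq_univ_of_card _ ?_
  rw [card_image_of_injOn (injOn_bitPair m), card_product, card_range, Fintype.card_fun,
    Fintype.card_prod, Fintype.card_bool, Fintype.card_fin, ← mul_pow]

theorem card_filter_forall_bitPair_mem (m : ℕ) (S : Fin m → Finset (Bool × Bool)) :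
    #((range (2 ^ m) ×ˢ range (2 ^ m)).filter fun p => ∀ i : Fin m, bitPair p i ∈ S i) =
      ∏ i, #(S i) := by
  calc _ = #(((range (2 ^ m) ×ˢ range (2 ^ m)).filter
          fun p => ∀ i : Fin m, bitPair p i ∈ S i).image fun p (i : Fin m) => bitPair p i) :=
        (card_image_of_injOn ((injOn_bitPair m).mono (filter_subset _ _))).symm
    _ = #(univ.filter fun f : Fin m → Bool × Bool => ∀ i, f i ∈ S i) := by
        rw [← image_bitPair_eq_univ, filter_image]
    _ = ∏ i, #(S i) := by
        rw [← Fintype.card_piFinset]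
        congr 1
        ext f
        simp [Fintype.mem_piFinset]

def pairsWithLowBitsIn (n m : ℕ) (T : Finset (Bool × Bool)) : Finset (ℕ × ℕ) :=
  (range (2 ^ n) ×ˢ range (2 ^ n)).filter fun p => ∀ i < m, bitPair p i ∈ T

theorem pairsWithLowBitsIn_inter (n m : ℕ) (T T' : Finset (Bool × Bool)) :
    pairsWithLowBitsIn n m T ∩ pairsWithLowBitsIn n m T' = pairsWithLowBitsIn n m (T ∩ T') := by
  ext p
  simp only [pairsWithLowBitsIn, mem_inter, mem_filter, forall_and]
  tauto

theorem card_pairsWithLowBitsIn_succ (m : ℕ) (T : Finset (Bool × Bool)) :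
    #(pairsWithLowBitsIn (m + 1) m T) = 4 * #T ^ m := by
  have h := card_filter_forall_bitPair_mem (m + 1) fun i => if (i : ℕ) < m then T else univ
  rw [Fin.prod_univ_castSucc] at h
  simp only [Fin.val_castSucc, Fin.is_lt, if_true, prod_const, card_univ, Fintype.card_fin,
    Fin.val_last, lt_irrefl, if_false, Fintype.card_prod, Fintype.card_bool] at h
  rw [pairsWithLowBitsIn, mul_comm, ← h]
  congr 1
  ext p
  simp only [mem_filter, Fin.forall_iff]
  refine and_congr_right fun _ => ⟨fun h i _ => ?_, fun h i hi => ?_⟩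
  · split_ifs with hi
    exacts [h i hi, mem_univ _]
  · simpa [hi] using h i (by omega)

theorem Finset.natCast_card_union_union {α : Type*} [DecidableEq α] (A B C : Finset α) :
    (#(A ∪ B ∪ C) : ℤ) =
      #A + #B + #C - #(A ∩ B) - #(B ∩ C) - #(C ∩ A) + #(A ∩ B ∩ C) := by
  have hAB := card_union_add_card_inter A B
  have hABC := card_union_add_card_inter (A ∪ B) C
  have hACBC := card_union_add_card_inter (A ∩ C) (B ∩ C)
  rw [union_inter_distrib_right] at hABC
  rw [show A ∩ C ∩ (B ∩ C) = A ∩ B ∩ C by ext; simp only [mem_inter]; tauto] at hACBC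
  rw [inter_comm C A]
  omega

open scoped Classical in
/-- Counting theorem for `x ^^^ y` versus `x + y`, `x - y`, `y - x` modulo `2^n`
among pairs of `n`-bit integers, for `n ≥ 1`. -/
theorem card_xor_add_sub_mod_counts (n : ℕ) (hn : 1 ≤ n) :
    let X := Finset.range (2 ^ n) ×ˢ Finset.range (2 ^ n)
    let A' := X.filter (fun p : ℕ × ℕ =>
      ((p.1 ^^^ p.2 : ℕ) : ℤ) ≡ (p.1 : ℤ) + (p.2 : ℤ) [ZMOD (2 ^ n : ℕ)])
    let B' := X.filter (fun p : ℕ × ℕ =>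
      ((p.1 ^^^ p.2 : ℕ) : ℤ) ≡ (p.1 : ℤ) - (p.2 : ℤ) [ZMOD (2 ^ n : ℕ)])
    let C' := X.filter (fun p : ℕ × ℕ =>
      ((p.1 ^^^ p.2 : ℕ) : ℤ) ≡ (p.2 : ℤ) - (p.1 : ℤ) [ZMOD (2 ^ n : ℕ)])
    A'.card = 4 * 3 ^ (n - 1) ∧ B'.card = 4 * 3 ^ (n - 1) ∧ C'.card = 4 * 3 ^ (n - 1) ∧
    (A' ∩ B').card = 4 * 2 ^ (n - 1) ∧ (B' ∩ C').card = 4 * 2 ^ (n - 1) ∧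
    (C' ∩ A').card = 4 * 2 ^ (n - 1) ∧
    (A' ∩ B' ∩ C').card = 4 ∧
    ((A' ∪ B' ∪ C').card : ℤ) = 4 * (3 * 3 ^ (n - 1) - 3 * 2 ^ (n - 1) + 1) := by
  intro X A' B' C'
  obtain ⟨m, rfl⟩ : ∃ m, n = m + 1 := ⟨n - 1, by omega⟩
  have hA : A' = pairsWithLowBitsIn (m + 1) m (univ.erase (true, true)) :=
    filter_congr fun p _ => by simpa using intCast_xor_modEq_add_iff p.1 p.2 m
  have hB : B' = pairsWithLowBitsIn (m + 1) m (univ.erase (false, true)) :=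
    filter_congr fun p _ => by simpa using intCast_xor_modEq_sub_iff p.1 p.2 m
  have hC : C' = pairsWithLowBitsIn (m + 1) m (univ.erase (true, false)) :=
    filter_congr fun p _ => by simpa using intCast_xor_modEq_rev_sub_iff p.1 p.2 m
  rw [natCast_card_union_union, hA, hB, hC]
  simp only [pairsWithLowBitsIn_inter, card_pairsWithLowBitsIn_succ, Nat.add_sub_cancel]
  simp +decide
  ring
end

section
/- Let n be a natural number, let u, v, w be n-bit integers, and let p, q, r ∈ {1, −1}. Then the equality u ⊕ v ⊕ w = p·u + q·v + r·w holds in the integers if and only if p·u_i + q·v_i + r·w_i ∈ {0, 1} for every position i with 0 ≤ i ≤ n − 1. -/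
/-!
Write `X = u ⊕ v ⊕ w` and `S = p u + q v + r w` in binary: `X - S = ∑ dᵢ 2ⁱ` with
`dᵢ = (uᵢ ⊕ vᵢ ⊕ wᵢ) - sᵢ`, where `sᵢ = p uᵢ + q vᵢ + r wᵢ ≡ uᵢ ⊕ vᵢ ⊕ wᵢ (mod 2)`.
So `dᵢ = 0` exactly when `sᵢ ∈ {0, 1}`, which gives one direction. Conversely, unless
`p = q = r = -1` (where every `dᵢ ≥ 0`), each `dᵢ` lies in `{-2, 0, 2}`, and a vanishing sum
`∑ eᵢ 2ⁱ` with digits `eᵢ ∈ {-1, 0, 1}` has all digits zero: `e₀` is even, hence zero, and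
one divides by `2`.
-/

open Finset

theorem Nat.mod_two_pow_eq_sum_testBit (x n : ℕ) :
    x % 2 ^ n = ∑ i ∈ range n, (x.testBit i).toNat * 2 ^ i := by
  induction n with
  | zero => simp [Nat.mod_one]
  | succ n ih => rw [Nat.mod_pow_succ, ih, sum_range_succ, Nat.toNat_testBit, mul_comm]

theorem Nat.cast_eq_sum_testBit {R : Type*} [Semiring R] {x n : ℕ} (hx : x < 2 ^ n) :
    (x : R) = ∑ i ∈ range n, (if x.testBit i then 1 else 0) * 2 ^ i := by
  nth_rw 1 [← Nat.mod_eq_of_lt hx]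
  rw [Nat.mod_two_pow_eq_sum_testBit]
  push_cast
  refine sum_congr rfl fun i _ => ?_
  cases x.testBit i <;> simp

theorem eq_zero_of_sum_mul_two_pow_eq_zero {n : ℕ} {e : ℕ → ℤ} (he : ∀ i < n, |e i| ≤ 1)
    (h : ∑ i ∈ range n, e i * 2 ^ i = 0) : ∀ i < n, e i = 0 := by
  induction n generalizing e with
  | zero => simp
  | succ n ih =>
    rw [sum_range_succ'] at h
    simp only [pow_succ, ← mul_assoc, ← sum_mul, pow_zero, mul_one] at h
    have he0 : e 0 = 0 := by
      have := abs_le.1 (he 0 n.succ_pos)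
      omega
    have htail : ∀ i < n, e (i + 1) = 0 :=
      ih (fun i hi => he _ (by omega)) (by simpa [he0] using h)
    rintro (_ | i) hi
    · exact he0
    · exact htail i (by omega)

theorem xor_bit_eq_signed_sum_iff {p q r : ℤ} (hp : p = 1 ∨ p = -1) (hq : q = 1 ∨ q = -1)
    (hr : r = 1 ∨ r = -1) (a b c : Bool) :
    (if a ^^ b ^^ c then (1 : ℤ) else 0) =
        p * (if a then 1 else 0) + q * (if b then 1 else 0) + r * (if c then 1 else 0) ↔
      p * (if a then 1 else 0) + q * (if b then 1 else 0) + r * (if c then 1 else 0) ∈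
        ({0, 1} : Set ℤ) := by
  rcases hp with rfl | rfl <;> rcases hq with rfl | rfl <;> rcases hr with rfl | rfl <;>
    cases a <;> cases b <;> cases c <;> norm_num

theorem exists_xor_bit_sub_signed_sum_eq_two_mul {p q r : ℤ} (hp : p = 1 ∨ p = -1)
    (hq : q = 1 ∨ q = -1) (hr : r = 1 ∨ r = -1) (hpqr : ¬(p = -1 ∧ q = -1 ∧ r = -1))
    (a b c : Bool) :
    ∃ e : ℤ, |e| ≤ 1 ∧ (if a ^^ b ^^ c then (1 : ℤ) else 0) -
      (p * (if a then 1 else 0) + q * (if b then 1 else 0) + r * (if c then 1 else 0)) =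
        2 * e := by
  rcases hp with rfl | rfl <;> rcases hq with rfl | rfl <;> rcases hr with rfl | rfl <;>
    cases a <;> cases b <;> cases c <;>
    first
    | exact absurd ⟨rfl, rfl, rfl⟩ hpqr
    | exact ⟨0, by decide⟩ | exact ⟨1, by decide⟩ | exact ⟨-1, by decide⟩

theorem xor_bit_sub_neg_sum_nonneg (a b c : Bool) :
    0 ≤ (if a ^^ b ^^ c then (1 : ℤ) else 0) -
      (-1 * (if a then 1 else 0) + -1 * (if b then 1 else 0) + -1 * (if c then 1 else 0)) := by
  cases a <;> cases b <;> cases c <;> decide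

/-- For `n`-bit integers `u, v, w` and signs `p, q, r ∈ {1, -1}`, the equality
`u ^^^ v ^^^ w = p*u + q*v + r*w` holds in `ℤ` iff `p*u_i + q*v_i + r*w_i ∈ {0, 1}`
for every bit position `i < n`. -/
theorem xor_three_eq_signed_sum_iff (n : ℕ) (u v w : ℕ)
    (hu : u < 2 ^ n) (hv : v < 2 ^ n) (hw : w < 2 ^ n)
    (p q r : ℤ) (hp : p = 1 ∨ p = -1) (hq : q = 1 ∨ q = -1) (hr : r = 1 ∨ r = -1) :
    ((u ^^^ v ^^^ w : ℕ) : ℤ) = p * (u : ℤ) + q * (v : ℤ) + r * (w : ℤ) ↔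
    ∀ i < n,
      p * (if u.testBit i then (1 : ℤ) else 0) +
      q * (if v.testBit i then (1 : ℤ) else 0) +
      r * (if w.testBit i then (1 : ℤ) else 0) ∈ ({0, 1} : Set ℤ) := by
  set d : ℕ → ℤ := fun i => (if u.testBit i ^^ v.testBit i ^^ w.testBit i then 1 else 0) -
    (p * (if u.testBit i then 1 else 0) + q * (if v.testBit i then 1 else 0) +
      r * (if w.testBit i then 1 else 0)) with hd
  have hx : u ^^^ v ^^^ w < 2 ^ n := Nat.xor_lt_two_pow (Nat.xor_lt_two_pow hu hv) hw
  have hsum : ((u ^^^ v ^^^ w : ℕ) : ℤ) - (p * u + q * v + r * w) =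
      ∑ i ∈ range n, d i * 2 ^ i := by
    simp only [Nat.cast_eq_sum_testBit hx, Nat.cast_eq_sum_testBit hu, Nat.cast_eq_sum_testBit hv,
      Nat.cast_eq_sum_testBit hw, Nat.testBit_xor, mul_sum, ← sum_add_distrib, ← sum_sub_distrib, hd]
    exact sum_congr rfl fun i _ => by ring
  rw [← sub_eq_zero, hsum]
  simp_rw [← xor_bit_eq_signed_sum_iff hp hq hr, ← sub_eq_zero (b := p * _ + _ + _)]
  change _ ↔ ∀ i < n, d i = 0
  refine ⟨fun h => ?_, fun h => sum_eq_zero fun i hi => by rw [h i (mem_range.1 hi), zero_mul]⟩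
  by_cases hpqr : p = -1 ∧ q = -1 ∧ r = -1
  · obtain ⟨rfl, rfl, rfl⟩ := hpqr
    have hterm_nonneg : ∀ i ∈ range n, 0 ≤ d i * 2 ^ i := fun i _ =>
      mul_nonneg (xor_bit_sub_neg_sum_nonneg _ _ _) (by positivity)
    intro i hi
    simpa using (sum_eq_zero_iff_of_nonneg hterm_nonneg).1 h i (mem_range.2 hi)
  · choose e he hde using exists_xor_bit_sub_signed_sum_eq_two_mul hp hq hr hpqr
    have hd_two_mul : ∀ i, d i = 2 * e (u.testBit i) (v.testBit i) (w.testBit i) :=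
      fun i => hde _ _ _
    simp only [hd_two_mul, mul_assoc, ← mul_sum, mul_eq_zero, two_ne_zero, false_or] at h ⊢
    exact eq_zero_of_sum_mul_two_pow_eq_zero (fun i _ => he _ _ _) h
end

section
/- Let n be a natural number. For n-bit integers u, v, w, the equality u ⊕ v ⊕ w = u + v + w holds if and only if for every position i with 0 ≤ i ≤ n − 1 at most one of the bits u_i, v_i, w_i equals 1; moreover, the number of triples (u, v, w) of n-bit integers satisfying u ⊕ v ⊕ w = u + v + w equals 4^n. -/
/-!
Since `x + y = (x ⊕ y) + 2 (x ∧ y)`, the sum `u + v + w` exceeds `u ⊕ v ⊕ w` by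
`2 (u ∧ v) + 2 ((u ⊕ v) ∧ w)`, so equality holds exactly when no bit is set in two of the three
numbers; call such a triple carry-free. For the count, split off the lowest bit: a triple is
carry-free iff both the triple of halves and the triple of lowest bits are, and 4 of the 8 triples
of bits are.
-/

open Finset

namespace Nat

theorem add_eq_xor_add_two_mul_and_s9 (x y : ℕ) : x + y = (x ^^^ y) + 2 * (x &&& y) := by
  induction x using binaryRec generalizing y with
  | zero => simp
  | bit a x ih =>
    cases y using bitCasesOn with
    | bit b y =>
      have := ih y
      rw [xor_bit, land_bit, bit_val, bit_val, bit_val, bit_val]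
      cases a <;> cases b <;> simp <;> omega

theorem land_eq_zero_iff {x y : ℕ} : x &&& y = 0 ↔ ∀ i, ¬(x.testBit i ∧ y.testBit i) := by
  refine ⟨fun h i => ?_, fun h => zero_of_testBit_eq_false fun i => ?_⟩
  · simpa [testBit_and] using congrArg (testBit · i) h
  · simpa [testBit_and] using h i

theorem land_eq_zero_iff_div_two_and_mod_two {x y : ℕ} :
    x &&& y = 0 ↔ x / 2 &&& y / 2 = 0 ∧ x % 2 &&& y % 2 = 0 := by
  have h := @and_mod_two_pow x y 1
  rw [pow_one] at h
  rw [← and_div_two, ← h]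
  omega

end Nat

theorem xor_three_eq_add_iff_land (u v w : ℕ) :
    u ^^^ v ^^^ w = u + v + w ↔ u &&& v = 0 ∧ (u ^^^ v) &&& w = 0 := by
  have := Nat.add_eq_xor_add_two_mul_and_s9 u v
  have := Nat.add_eq_xor_add_two_mul_and_s9 (u ^^^ v) w
  omega

theorem xor_three_eq_add_iff_testBit (u v w : ℕ) :
    u ^^^ v ^^^ w = u + v + w ↔
      ∀ i, (if u.testBit i then (1 : ℕ) else 0) + (if v.testBit i then (1 : ℕ) else 0) +
        (if w.testBit i then (1 : ℕ) else 0) ≤ 1 := by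
  rw [xor_three_eq_add_iff_land, Nat.land_eq_zero_iff, Nat.land_eq_zero_iff, ← forall_and]
  refine forall_congr' fun i => ?_
  rw [Nat.testBit_xor]
  cases u.testBit i <;> cases v.testBit i <;> cases w.testBit i <;> simp

theorem xor_three_eq_add_iff_testBit_lt {n u v w : ℕ} (hu : u < 2 ^ n) (hv : v < 2 ^ n)
    (hw : w < 2 ^ n) :
    u ^^^ v ^^^ w = u + v + w ↔
      ∀ i < n, (if u.testBit i then (1 : ℕ) else 0) + (if v.testBit i then (1 : ℕ) else 0) +
        (if w.testBit i then (1 : ℕ) else 0) ≤ 1 := by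
  rw [xor_three_eq_add_iff_testBit]
  refine ⟨fun h i _ => h i, fun h i => ?_⟩
  rcases lt_or_ge i n with hi | hi
  · exact h i hi
  · have high : ∀ x < 2 ^ n, x.testBit i = false := fun x hx =>
      Nat.testBit_lt_two_pow (hx.trans_le (Nat.pow_le_pow_right two_pos hi))
    simp [high u hu, high v hv, high w hw]

theorem xor_three_eq_add_iff_div_two_and_mod_two (u v w : ℕ) :
    u ^^^ v ^^^ w = u + v + w ↔
      u / 2 ^^^ v / 2 ^^^ w / 2 = u / 2 + v / 2 + w / 2 ∧
        u % 2 ^^^ v % 2 ^^^ w % 2 = u % 2 + v % 2 + w % 2 := by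
  have h := @Nat.xor_mod_two_pow u v 1
  rw [pow_one] at h
  simp only [xor_three_eq_add_iff_land, Nat.land_eq_zero_iff_div_two_and_mod_two (x := u),
    Nat.land_eq_zero_iff_div_two_and_mod_two (x := u ^^^ v), Nat.xor_div_two, h]
  tauto

def carryFreeTriples (m : ℕ) : Finset (ℕ × ℕ × ℕ) :=
  (range m ×ˢ range m ×ˢ range m).filter fun t => t.1 ^^^ t.2.1 ^^^ t.2.2 = t.1 + t.2.1 + t.2.2

theorem lt_of_mem_carryFreeTriples {m u v w : ℕ} (h : (u, v, w) ∈ carryFreeTriples m) :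
    u < m ∧ v < m ∧ w < m := by
  simpa only [mem_product, mem_range] using (mem_filter.1 h).1

theorem mem_carryFreeTriples_two_mul {m u v w : ℕ} :
    (u, v, w) ∈ carryFreeTriples (2 * m) ↔
      (u / 2, v / 2, w / 2) ∈ carryFreeTriples m ∧ (u % 2, v % 2, w % 2) ∈ carryFreeTriples 2 := by
  have lt_two_mul : ∀ x, x < 2 * m ↔ x / 2 < m := by omega
  simp only [carryFreeTriples, mem_filter, mem_product, mem_range, lt_two_mul,
    Nat.mod_lt _ two_pos, xor_three_eq_add_iff_div_two_and_mod_two u v w]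
  tauto

theorem card_carryFreeTriples_two_mul (m : ℕ) :
    #(carryFreeTriples (2 * m)) = #(carryFreeTriples m) * 4 := by
  rw [show 4 = #(carryFreeTriples 2) by decide, ← card_product]
  refine card_nbij' (fun t => ((t.1 / 2, t.2.1 / 2, t.2.2 / 2), (t.1 % 2, t.2.1 % 2, t.2.2 % 2)))
    (fun p => (2 * p.1.1 + p.2.1, 2 * p.1.2.1 + p.2.2.1, 2 * p.1.2.2 + p.2.2.2)) ?_ ?_ ?_ ?_
  · rintro ⟨u, v, w⟩ h
    exact mem_product.2 (mem_carryFreeTriples_two_mul.1 h)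
  · rintro ⟨⟨a, b, c⟩, r, s, t⟩ h
    obtain ⟨habc, hrst⟩ := mem_product.1 h
    have := lt_of_mem_carryFreeTriples hrst
    show (2 * a + r, 2 * b + s, 2 * c + t) ∈ _
    refine mem_carryFreeTriples_two_mul.2 ?_
    convert And.intro habc hrst using 2 <;> simp only [Prod.mk.injEq] <;> omega
  · rintro ⟨u, v, w⟩ -
    simp only [Prod.mk.injEq]
    omega
  · rintro ⟨⟨a, b, c⟩, r, s, t⟩ h
    have := lt_of_mem_carryFreeTriples (mem_product.1 h).2
    simp only [Prod.mk.injEq]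
    omega

theorem card_carryFreeTriples_two_pow (n : ℕ) : #(carryFreeTriples (2 ^ n)) = 4 ^ n := by
  induction n with
  | zero => decide
  | succ n ih => rw [pow_succ', card_carryFreeTriples_two_mul, ih, pow_succ]

/-- For `n`-bit integers `u, v, w`, `u ^^^ v ^^^ w = u + v + w` iff at most one of
the bits `u_i, v_i, w_i` equals 1 for each `i < n`; there are `4^n` such triples. -/
theorem xor_three_eq_add_iff_and_card (n : ℕ) :
    (∀ u v w : ℕ, u < 2 ^ n → v < 2 ^ n → w < 2 ^ n →
      (u ^^^ v ^^^ w = u + v + w ↔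
        ∀ i < n,
          (if u.testBit i then (1 : ℕ) else 0) +
          (if v.testBit i then (1 : ℕ) else 0) +
          (if w.testBit i then (1 : ℕ) else 0) ≤ 1)) ∧
    ((Finset.range (2 ^ n) ×ˢ Finset.range (2 ^ n) ×ˢ Finset.range (2 ^ n)).filter
      (fun t : ℕ × ℕ × ℕ => t.1 ^^^ t.2.1 ^^^ t.2.2 = t.1 + t.2.1 + t.2.2)).card
      = 4 ^ n :=
  ⟨fun _ _ _ => xor_three_eq_add_iff_testBit_lt, card_carryFreeTriples_two_pow n⟩
end

section
/- Let a, b, c be natural numbers with 1 ≤ a, b, c ≤ 63, let m = min(b, c), and let n ≤ m. Let (s_i) be a sequence of 64-bit words satisfying the xorshift128+ state recursion s_{i+2} = ((s_i ⊕ (s_i ≪ a)) ⊕ ((s_i ⊕ (s_i ≪ a)) ≫ b)) ⊕ (s_{i+1} ⊕ (s_{i+1} ≫ c)), and define o'_i := s_i ⊕ s_{i+1}. Then the sequence (o'_i) satisfies the same recursion, and for every i the n most significant bits of o'_{i+2} agree with the n most significant bits of (o'_i ⊕ (o'_i ≪ a)) ⊕ o'_{i+1}; that is, ⌊o'_{i+2}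 / 2^(64−n)⌋ = ⌊((o'_i ⊕ (o'_i ≪ a)) ⊕ o'_{i+1}) / 2^(64−n)⌋. -/
/-!
Bitwise xor makes `ℕ` an `𝔽₂`-vector space, and shifts, truncated shifts and their xor
combinations are linear maps on it. A linear recurrence `s (i + 2) = T (s i) ^^^ G (s (i + 1))`
with linear `T`, `G` is therefore inherited by every sum `s i ^^^ s (i + 1)` of consecutive terms.
For the top bits, the recursion gives `o (i + 2) = (u ^^^ v) ^^^ (u >>> b ^^^ v >>> c)` with
the 64-bit words `u = o i ^^^ (o i ≪ a)` and `v = o (i + 1)`; the second summand is below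
`2 ^ (64 - n)` when `n ≤ min b c`, so it does not reach the `n` most significant bits.
-/

namespace Nat

def IsXorHom (f : ℕ → ℕ) : Prop :=
  ∀ x y, f (x ^^^ y) = f x ^^^ f y

namespace IsXorHom

theorem id : IsXorHom fun x => x :=
  fun _ _ => rfl

theorem shiftRight (k : ℕ) : IsXorHom (· >>> k) :=
  fun _ _ => Nat.shiftRight_xor_distrib

theorem mul_two_pow_mod_two_pow (a m : ℕ) : IsXorHom fun x => 2 ^ a * x % 2 ^ m := by
  intro x y
  simp only [Nat.mul_comm (2 ^ a), ← Nat.shiftLeft_eq, Nat.shiftLeft_xor_distrib,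
    Nat.xor_mod_two_pow]

theorem xor {f g : ℕ → ℕ} (hf : IsXorHom f) (hg : IsXorHom g) :
    IsXorHom fun x => f x ^^^ g x := by
  intro x y
  simp only [hf x y, hg x y]
  ac_rfl

theorem comp {f g : ℕ → ℕ} (hf : IsXorHom f) (hg : IsXorHom g) : IsXorHom (f ∘ g) := by
  intro x y
  simp only [Function.comp_apply, hg x y, hf (g x)]

end IsXorHom

theorem xor_succ_of_xor_recurrence {T G : ℕ → ℕ} (hT : IsXorHom T) (hG : IsXorHom G)
    {s : ℕ → ℕ} (hrec : ∀ i, s (i + 2) = T (s i) ^^^ G (s (i + 1))) (i : ℕ) :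
    s (i + 2) ^^^ s (i + 3) =
      T (s i ^^^ s (i + 1)) ^^^ G (s (i + 1) ^^^ s (i + 2)) := by
  rw [hrec (i + 1), hT, hG, hrec i]
  ac_rfl

theorem shiftRight_lt_two_pow_sub {u m k n : ℕ} (hu : u < 2 ^ m) (hn : n ≤ k) (hk : k ≤ m) :
    u >>> k < 2 ^ (m - n) := by
  rw [Nat.shiftRight_eq_div_pow]
  refine Nat.div_lt_of_lt_mul (hu.trans_le ?_)
  rw [← pow_add]
  exact Nat.pow_le_pow_right two_pos (by omega)

theorem xor_div_two_pow_of_lt (x : ℕ) {y k : ℕ} (hy : y < 2 ^ k) :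
    (x ^^^ y) / 2 ^ k = x / 2 ^ k := by
  rw [Nat.xor_div_two_pow, Nat.div_eq_of_lt hy, Nat.xor_zero]

theorem xor_shiftRight_xor_div_two_pow {u v m b c n : ℕ} (hu : u < 2 ^ m) (hv : v < 2 ^ m)
    (hb : b ≤ m) (hc : c ≤ m) (hn : n ≤ min b c) :
    ((u ^^^ u >>> b) ^^^ (v ^^^ v >>> c)) / 2 ^ (m - n) = (u ^^^ v) / 2 ^ (m - n) := by
  have hlow : u >>> b ^^^ v >>> c < 2 ^ (m - n) :=
    Nat.xor_lt_two_pow (shiftRight_lt_two_pow_sub hu (hn.trans (min_le_left _ _)) hb)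
      (shiftRight_lt_two_pow_sub hv (hn.trans (min_le_right _ _)) hc)
  rw [← xor_div_two_pow_of_lt (u ^^^ v) hlow]
  congr 1
  ac_rfl

end Nat

theorem xorshift128plus_xor_output_recursion_general (a b c n : ℕ)
    (hb2 : b ≤ 63) (hc2 : c ≤ 63) (hn : n ≤ min b c)
    (s : ℕ → ℕ) (hs : ∀ i, s i < 2 ^ 64)
    (hrec : ∀ i, s (i + 2) =
      ((s i ^^^ ((2 ^ a * s i) % 2 ^ 64)) ^^^
          ((s i ^^^ ((2 ^ a * s i) % 2 ^ 64)) >>> b)) ^^^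
        (s (i + 1) ^^^ (s (i + 1) >>> c))) :
    let o : ℕ → ℕ := fun i => s i ^^^ s (i + 1)
    (∀ i, o (i + 2) =
      ((o i ^^^ ((2 ^ a * o i) % 2 ^ 64)) ^^^
          ((o i ^^^ ((2 ^ a * o i) % 2 ^ 64)) >>> b)) ^^^
        (o (i + 1) ^^^ (o (i + 1) >>> c))) ∧
    (∀ i, o (i + 2) / 2 ^ (64 - n) =
      ((o i ^^^ ((2 ^ a * o i) % 2 ^ 64)) ^^^ o (i + 1)) / 2 ^ (64 - n)) := by
  intro o
  set F : ℕ → ℕ := fun x => x ^^^ 2 ^ a * x % 2 ^ 64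
  have hF : Nat.IsXorHom F := .xor .id (.mul_two_pow_mod_two_pow a 64)
  have hT : Nat.IsXorHom fun x => F x ^^^ F x >>> b :=
    (Nat.IsXorHom.xor .id (.shiftRight b)).comp hF
  have hG : Nat.IsXorHom fun x => x ^^^ x >>> c := .xor .id (.shiftRight c)
  have hrec_o : ∀ i, o (i + 2) =
      (F (o i) ^^^ F (o i) >>> b) ^^^ (o (i + 1) ^^^ o (i + 1) >>> c) :=
    Nat.xor_succ_of_xor_recurrence hT hG hrec
  have ho : ∀ i, o i < 2 ^ 64 := fun i => Nat.xor_lt_two_pow (hs i) (hs (i + 1))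
  have hFo : ∀ i, F (o i) < 2 ^ 64 := fun i =>
    Nat.xor_lt_two_pow (ho i) (Nat.mod_lt _ (by positivity))
  refine ⟨hrec_o, fun i => ?_⟩
  rw [hrec_o i]
  exact Nat.xor_shiftRight_xor_div_two_pow (hFo i) (ho (i + 1)) (by omega) (by omega) hn

/-- If `(s_i)` is a sequence of 64-bit words satisfying the xorshift128+ state
recursion with parameters `a, b, c`, then `o'_i := s_i ^^^ s_{i+1}` satisfies the
same recursion, and the `n` most significant bits of `o'_{i+2}` (for `n ≤ min b c`)
agree with those of `(o'_i ^^^ (o'_i ≪ a)) ^^^ o'_{i+1}`. -/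
theorem xorshift128plus_xor_output_recursion (a b c n : ℕ)
    (ha1 : 1 ≤ a) (ha2 : a ≤ 63) (hb1 : 1 ≤ b) (hb2 : b ≤ 63)
    (hc1 : 1 ≤ c) (hc2 : c ≤ 63) (hn : n ≤ min b c)
    (s : ℕ → ℕ) (hs : ∀ i, s i < 2 ^ 64)
    (hrec : ∀ i, s (i + 2) =
      ((s i ^^^ ((2 ^ a * s i) % 2 ^ 64)) ^^^
          ((s i ^^^ ((2 ^ a * s i) % 2 ^ 64)) >>> b)) ^^^
        (s (i + 1) ^^^ (s (i + 1) >>> c))) :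
    let o : ℕ → ℕ := fun i => s i ^^^ s (i + 1)
    (∀ i, o (i + 2) =
      ((o i ^^^ ((2 ^ a * o i) % 2 ^ 64)) ^^^
          ((o i ^^^ ((2 ^ a * o i) % 2 ^ 64)) >>> b)) ^^^
        (o (i + 1) ^^^ (o (i + 1) >>> c))) ∧
    (∀ i, o (i + 2) / 2 ^ (64 - n) =
      ((o i ^^^ ((2 ^ a * o i) % 2 ^ 64)) ^^^ o (i + 1)) / 2 ^ (64 - n)) :=
  xorshift128plus_xor_output_recursion_general a b c n hb2 hc2 hn s hs hrec
end

section
/- Let a, b, c be natural numbers with 1 ≤ a, b, c ≤ 63 and let n be a natural number with 1 ≤ n ≤ min(b, c). Let s_i and s_{i+1} be 64-bit words and define s_{i+2} and s_{i+3} by the xorshift128+ state recursion s_{k+2} = ((s_k ⊕ (s_k ≪ a)) ⊕ ((s_k ⊕ (s_k ≪ a)) ≫ b)) ⊕ (s_{k+1} ⊕ (s_{k+1} ≫ c)). Define the outputs x = (s_i + s_{i+1}) mod 2^64, y = (s_{i+1} + s_{i+2}) mod 2^64, z = (s_{i+2} + s_{i+3}) mod 2^64. Let p, q, r ∈ {1,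 −1} with exactly two of them equal to 1, and assume the two congruences (in the integers, modulo 2^64): [s_{i+1}]_n ⊕ [s_i]_n ⊕ [s_i ≪ a]_n ≡ p·[s_{i+1}]_n + q·[s_i]_n + r·[s_i ≪ a]_n and [s_{i+2}]_n ⊕ [s_{i+1}]_n ⊕ [s_{i+1} ≪ a]_n ≡ p·[s_{i+2}]_n + q·[s_{i+1}]_n + r·[s_{i+1} ≪ a]_n. Then there exists an integer k such that |z − (q + r·2^a)·x − p·y − k·2^64| ≤ 4·(2^(64−n) − 1). -/
/-- `msbTrunc n u` is the 64-bit word `[u]_n` having the same `n` most significant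
bits as `u` and zeroes in the remaining `64 - n` bits. -/
def msbTrunc (n u : ℕ) : ℕ := u - u % 2 ^ (64 - n)

/-- `lshift64 a u` is the left shift of `u` by `a` bits truncated to 64 bits. -/
def lshift64 (a u : ℕ) : ℕ := (2 ^ a * u) % 2 ^ 64

/-- One step of the xorshift128+ state recursion with parameters `a, b, c`:
given the state `(s₀, s₁)`, it returns
`((s₀ ⊕ (s₀ ≪ a)) ⊕ ((s₀ ⊕ (s₀ ≪ a)) ≫ b)) ⊕ (s₁ ⊕ (s₁ ≫ c))`. -/
def xsStep (a b c s0 s1 : ℕ) : ℕ :=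
  ((s0 ^^^ lshift64 a s0) ^^^ ((s0 ^^^ lshift64 a s0) >>> b)) ^^^ (s1 ^^^ (s1 >>> c))

/-!
Write `[u]_n = u - ℓ(u)` with `0 ≤ ℓ(u) < 2^(64-n)` the low bits. Since `n ≤ b, c`, the right
shifts in the recursion do not reach the top `n` bits, so `[s_{k+2}]_n` is the xor of
`[s_{k+1}]_n`, `[s_k]_n` and `[s_k ≪ a]_n`, which the hypotheses replace by a signed sum.
Hence, modulo `2^64`, `s_{k+2} ≡ p s_{k+1} + q s_k + r 2^a s_k` up to low-bit terms, and adding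
the cases `k = i` and `k = i + 1` gives `z ≡ (q + r 2^a) x + p y` up to eight low-bit terms.
Four of them come with sign `+` and four with sign `-` exactly because two of `p, q, r` are `1`
and one is `-1`, so the error lies in `[-4 (2^(64-n) - 1), 4 (2^(64-n) - 1)]`.
-/

def lowBits (n u : ℕ) : ℕ := u % 2 ^ (64 - n)

lemma lowBits_mem_Icc (n u : ℕ) : (lowBits n u : ℤ) ∈ Set.Icc 0 (2 ^ (64 - n) - 1) :=
  ⟨Int.natCast_nonneg _, Int.le_sub_one_of_lt (by exact_mod_cast Nat.mod_lt u (Nat.two_pow_pos _))⟩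

lemma msbTrunc_natCast {R : Type*} [AddGroupWithOne R] (n u : ℕ) :
    (msbTrunc n u : R) = u - lowBits n u :=
  Nat.cast_sub (Nat.mod_le _ _)

lemma msbTrunc_eq_shiftRight_shiftLeft (n u : ℕ) :
    msbTrunc n u = u >>> (64 - n) <<< (64 - n) := by
  rw [msbTrunc, Nat.shiftRight_eq_div_pow, Nat.shiftLeft_eq, Nat.mul_comm]
  have := Nat.div_add_mod u (2 ^ (64 - n))
  omega

lemma msbTrunc_xor (n u v : ℕ) : msbTrunc n (u ^^^ v) = msbTrunc n u ^^^ msbTrunc n v := by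
  simp only [msbTrunc_eq_shiftRight_shiftLeft]
  apply Nat.eq_of_testBit_eq
  intro i
  simp only [Nat.testBit_xor, Nat.testBit_shiftLeft, Nat.testBit_shiftRight]
  by_cases h : 64 - n ≤ i <;> simp [h]

lemma msbTrunc_shiftRight_eq_zero {n b u : ℕ} (hu : u < 2 ^ 64) (hnb : n ≤ b) :
    msbTrunc n (u >>> b) = 0 := by
  have hlt : u >>> b < 2 ^ (64 - n) := by
    rw [Nat.shiftRight_eq_div_pow]
    apply Nat.div_lt_of_lt_mul
    calc u < 2 ^ 64 := hu
      _ ≤ 2 ^ b * 2 ^ (64 - n) := by rw [← pow_add]; exact Nat.pow_le_pow_right two_pos (by omega)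
  rw [msbTrunc, Nat.mod_eq_of_lt hlt, Nat.sub_self]

lemma lshift64_lt_two_pow (a u : ℕ) : lshift64 a u < 2 ^ 64 :=
  Nat.mod_lt _ (Nat.two_pow_pos _)

lemma lshift64_natCast (a u : ℕ) : (lshift64 a u : ZMod (2 ^ 64)) = 2 ^ a * u := by
  rw [lshift64, ZMod.natCast_mod, Nat.cast_mul, Nat.cast_pow, Nat.cast_ofNat]

lemma xsStep_lt_two_pow (a b c : ℕ) {s0 s1 : ℕ} (hs0 : s0 < 2 ^ 64) (hs1 : s1 < 2 ^ 64) :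
    xsStep a b c s0 s1 < 2 ^ 64 := by
  have hA : s0 ^^^ lshift64 a s0 < 2 ^ 64 := Nat.xor_lt_two_pow hs0 (lshift64_lt_two_pow a s0)
  exact Nat.xor_lt_two_pow (Nat.xor_lt_two_pow hA ((Nat.shiftRight_le _ b).trans_lt hA))
    (Nat.xor_lt_two_pow hs1 ((Nat.shiftRight_le _ c).trans_lt hs1))

lemma msbTrunc_xsStep (a : ℕ) {b c n s0 s1 : ℕ} (hs0 : s0 < 2 ^ 64) (hs1 : s1 < 2 ^ 64)
    (hnb : n ≤ b) (hnc : n ≤ c) :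
    msbTrunc n (xsStep a b c s0 s1) =
      msbTrunc n s1 ^^^ msbTrunc n s0 ^^^ msbTrunc n (lshift64 a s0) := by
  have hA : s0 ^^^ lshift64 a s0 < 2 ^ 64 := Nat.xor_lt_two_pow hs0 (lshift64_lt_two_pow a s0)
  rw [xsStep, msbTrunc_xor, msbTrunc_xor, msbTrunc_xor, msbTrunc_xor,
    msbTrunc_shiftRight_eq_zero hA hnb, msbTrunc_shiftRight_eq_zero hs1 hnc, Nat.xor_zero,
    Nat.xor_zero]
  ac_rfl

lemma sub_lowBits_eq_of_msbTrunc_modEq {a n u v w : ℕ} {p q r : ℤ}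
    (h : (msbTrunc n w : ℤ) ≡ p * (msbTrunc n v : ℤ) + q * (msbTrunc n u : ℤ) +
      r * (msbTrunc n (lshift64 a u) : ℤ) [ZMOD (2 ^ 64 : ℕ)]) :
    (w - lowBits n w : ZMod (2 ^ 64)) = p * (v - lowBits n v) + q * (u - lowBits n u) +
      r * (2 ^ a * u - lowBits n (lshift64 a u)) := by
  rw [← ZMod.intCast_eq_intCast_iff] at h
  push_cast [msbTrunc_natCast] at h
  rwa [lshift64_natCast] at h

lemma abs_signed_error_le {p q r M e₀ e₁ e₂ e₃ f₀ f₁ : ℤ}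
    (hpqr : (p = -1 ∧ q = 1 ∧ r = 1) ∨ (p = 1 ∧ q = -1 ∧ r = 1) ∨ (p = 1 ∧ q = 1 ∧ r = -1))
    (h₀ : e₀ ∈ Set.Icc 0 M) (h₁ : e₁ ∈ Set.Icc 0 M) (h₂ : e₂ ∈ Set.Icc 0 M)
    (h₃ : e₃ ∈ Set.Icc 0 M) (h₀' : f₀ ∈ Set.Icc 0 M) (h₁' : f₁ ∈ Set.Icc 0 M) :
    |e₂ + e₃ - p * (e₁ + e₂) - q * (e₀ + e₁) - r * (f₀ + f₁)| ≤ 4 * M := by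
  obtain ⟨_, _⟩ := h₀; obtain ⟨_, _⟩ := h₁; obtain ⟨_, _⟩ := h₂
  obtain ⟨_, _⟩ := h₃; obtain ⟨_, _⟩ := h₀'; obtain ⟨_, _⟩ := h₁'
  rw [abs_le]
  rcases hpqr with ⟨rfl, rfl, rfl⟩ | ⟨rfl, rfl, rfl⟩ | ⟨rfl, rfl, rfl⟩ <;> constructor <;> linarith

lemma exists_abs_sub_mul_le_of_modEq {m : ℕ} {u v B : ℤ} (h : u ≡ v [ZMOD m])
    (hv : |v| ≤ B) : ∃ k : ℤ, |u - k * m| ≤ B := by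
  obtain ⟨t, rfl⟩ := Int.modEq_iff_add_fac.mp h
  exact ⟨-t, by rwa [neg_mul, sub_neg_eq_add, mul_comm]⟩

theorem xorshift128plus_near_plane_general (a b c n : ℕ)
    (hn2 : n ≤ min b c)
    (s0 s1 s2 s3 : ℕ) (hs0 : s0 < 2 ^ 64) (hs1 : s1 < 2 ^ 64)
    (hs2 : s2 = xsStep a b c s0 s1) (hs3 : s3 = xsStep a b c s1 s2)
    (x y z : ℕ)
    (hx : x = (s0 + s1) % 2 ^ 64) (hy : y = (s1 + s2) % 2 ^ 64)
    (hz : z = (s2 + s3) % 2 ^ 64)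
    (p q r : ℤ)
    (hpqr : (p = -1 ∧ q = 1 ∧ r = 1) ∨ (p = 1 ∧ q = -1 ∧ r = 1) ∨
      (p = 1 ∧ q = 1 ∧ r = -1))
    (h1 : ((msbTrunc n s1 ^^^ msbTrunc n s0 ^^^ msbTrunc n (lshift64 a s0) : ℕ) : ℤ) ≡
      p * (msbTrunc n s1 : ℤ) + q * (msbTrunc n s0 : ℤ) +
        r * (msbTrunc n (lshift64 a s0) : ℤ) [ZMOD (2 ^ 64 : ℕ)])
    (h2 : ((msbTrunc n s2 ^^^ msbTrunc n s1 ^^^ msbTrunc n (lshift64 a s1) : ℕ) : ℤ) ≡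
      p * (msbTrunc n s2 : ℤ) + q * (msbTrunc n s1 : ℤ) +
        r * (msbTrunc n (lshift64 a s1) : ℤ) [ZMOD (2 ^ 64 : ℕ)]) :
    ∃ k : ℤ,
      |(z : ℤ) - (q + r * 2 ^ a) * (x : ℤ) - p * (y : ℤ) - k * 2 ^ 64| ≤
        4 * (2 ^ (64 - n) - 1) := by
  obtain ⟨hnb, hnc⟩ := le_min_iff.mp hn2
  have hs2w : s2 < 2 ^ 64 := hs2 ▸ xsStep_lt_two_pow a b c hs0 hs1
  rw [← msbTrunc_xsStep a hs0 hs1 hnb hnc, ← hs2] at h1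
  rw [← msbTrunc_xsStep a hs1 hs2w hnb hnc, ← hs3] at h2
  set ℓ : ℕ → ℤ := fun u ↦ (lowBits n u : ℤ)
  have hmod : (z : ℤ) - (q + r * 2 ^ a) * x - p * y ≡ ℓ s2 + ℓ s3 - p * (ℓ s1 + ℓ s2) -
      q * (ℓ s0 + ℓ s1) - r * (ℓ (lshift64 a s0) + ℓ (lshift64 a s1)) [ZMOD (2 ^ 64 : ℕ)] := by
    have hxN : (x : ZMod (2 ^ 64)) = s0 + s1 := by rw [hx, ZMod.natCast_mod, Nat.cast_add]
    have hyN : (y : ZMod (2 ^ 64)) = s1 + s2 := by rw [hy, ZMod.natCast_mod, Nat.cast_add]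
    have hzN : (z : ZMod (2 ^ 64)) = s2 + s3 := by rw [hz, ZMod.natCast_mod, Nat.cast_add]
    rw [← ZMod.intCast_eq_intCast_iff]
    push_cast [ℓ]
    linear_combination sub_lowBits_eq_of_msbTrunc_modEq h1 +
      sub_lowBits_eq_of_msbTrunc_modEq h2 + hzN - (q + r * 2 ^ a) * hxN - p * hyN
  have hbound := exists_abs_sub_mul_le_of_modEq hmod <| abs_signed_error_le hpqr
    (lowBits_mem_Icc n _) (lowBits_mem_Icc n _) (lowBits_mem_Icc n _) (lowBits_mem_Icc n _)
    (lowBits_mem_Icc n _) (lowBits_mem_Icc n _)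
  simpa only [Nat.cast_pow, Nat.cast_ofNat] using hbound

/-- Under the sign conditions (two of `p, q, r` equal `1`, the other `-1`) and the two
modular equalities approximating xor by a signed sum on the top `n` bits, three
consecutive outputs `(x, y, z)` of xorshift128+ are, modulo `2^64`, within
`4 * (2^(64-n) - 1)` of the plane `z = (q + r * 2^a) * x + p * y`. -/
theorem xorshift128plus_near_plane (a b c n : ℕ)
    (ha1 : 1 ≤ a) (ha2 : a ≤ 63) (hb1 : 1 ≤ b) (hb2 : b ≤ 63)
    (hc1 : 1 ≤ c) (hc2 : c ≤ 63) (hn1 : 1 ≤ n) (hn2 : n ≤ min b c)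
    (s0 s1 s2 s3 : ℕ) (hs0 : s0 < 2 ^ 64) (hs1 : s1 < 2 ^ 64)
    (hs2 : s2 = xsStep a b c s0 s1) (hs3 : s3 = xsStep a b c s1 s2)
    (x y z : ℕ)
    (hx : x = (s0 + s1) % 2 ^ 64) (hy : y = (s1 + s2) % 2 ^ 64)
    (hz : z = (s2 + s3) % 2 ^ 64)
    (p q r : ℤ)
    (hpqr : (p = -1 ∧ q = 1 ∧ r = 1) ∨ (p = 1 ∧ q = -1 ∧ r = 1) ∨
      (p = 1 ∧ q = 1 ∧ r = -1))
    (h1 : ((msbTrunc n s1 ^^^ msbTrunc n s0 ^^^ msbTrunc n (lshift64 a s0) : ℕ) : ℤ) ≡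
      p * (msbTrunc n s1 : ℤ) + q * (msbTrunc n s0 : ℤ) +
        r * (msbTrunc n (lshift64 a s0) : ℤ) [ZMOD (2 ^ 64 : ℕ)])
    (h2 : ((msbTrunc n s2 ^^^ msbTrunc n s1 ^^^ msbTrunc n (lshift64 a s1) : ℕ) : ℤ) ≡
      p * (msbTrunc n s2 : ℤ) + q * (msbTrunc n s1 : ℤ) +
        r * (msbTrunc n (lshift64 a s1) : ℤ) [ZMOD (2 ^ 64 : ℕ)]) :
    ∃ k : ℤ,
      |(z : ℤ) - (q + r * 2 ^ a) * (x : ℤ) - p * (y : ℤ) - k * 2 ^ 64| ≤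
        4 * (2 ^ (64 - n) - 1) :=
  xorshift128plus_near_plane_general a b c n hn2 s0 s1 s2 s3 hs0 hs1 hs2 hs3 x y z hx hy hz p q r
    hpqr h1 h2
end
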